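/- Let f : ℝⁿ → (−∞, ∞] be a convex function and x ∈ ℝⁿ a point such that the second-order Taylor expansion f(x + y) = f(x) + ⟨y, v⟩ + (1/2)⟨y, H y⟩ + o(‖y‖²) holds as y → 0, for some vector v ∈ ℝⁿ and some positive definite symmetric matrix H. Let n̂ ∈ ℝⁿ be a unit vector and set s := ⟨n̂, x⟩. Then, as γ ↘ 0, the infimum of f(x⁺) + f(x⁻) − 2f(x) over all x⁺, x⁻ ∈ ℝⁿ with x⁺ + x⁻ = 2x and ⟨n̂, x^±⟩ = s ± γ equals γ²/⟨n̂, H⁻¹ n̂⟩ + o(γ²). -/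
import Mathlib

open MeasureTheory Filter Asymptotics
open scoped RealInnerProductSpace Topology

def IsLogConcave {E : Type*} [AddCommGroup E] [Module ℝ E] (ρ : E → ℝ) : Prop :=
  ∀ x y : E, ∀ a b : ℝ, 0 ≤ a → 0 ≤ b → a + b = 1 →
    ρ x ^ a * ρ y ^ b ≤ ρ (a • x + b • y)

section Aux
variable {n : ℕ}

lemma cs_H (H : EuclideanSpace ℝ (Fin n) →ₗ[ℝ] EuclideanSpace ℝ (Fin n))
    (hsymm : ∀ y z, ⟪H y, z⟫ = ⟪y, H z⟫)
    (hpos0 : ∀ y, 0 ≤ ⟪y, H y⟫) (w y : EuclideanSpace ℝ (Fin n)) (hww : 0 < ⟪w, H w⟫) :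
    ⟪H w, y⟫ ^ 2 ≤ ⟪w, H w⟫ * ⟪y, H y⟫ := by
  set t := ⟪H w, y⟫ / ⟪w, H w⟫ with ht
  have h := hpos0 (y - t • w)
  have h1 : ⟪y - t • w, H (y - t • w)⟫
      = ⟪y, H y⟫ - 2 * t * ⟪H w, y⟫ + t ^ 2 * ⟪w, H w⟫ := by
    have hc : ⟪w, H y⟫ = ⟪H w, y⟫ := (hsymm w y).symm
    have hc2 : ⟪y, H w⟫ = ⟪H w, y⟫ := real_inner_comm _ _
    simp only [map_sub, _root_.map_smul, inner_sub_left, inner_sub_right,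
      real_inner_smul_left, real_inner_smul_right, hc, hc2]
    ring
  rw [h1, ht] at h
  generalize hA : ⟪w, H w⟫ = A at *
  generalize hB : ⟪H w, y⟫ = B at *
  generalize hC : ⟪y, H y⟫ = C at *
  have hAne : A ≠ 0 := ne_of_gt hww
  have key : 0 ≤ C - B ^ 2 / A := by
    have e1 : 2 * (B / A) * B = 2 * (B ^ 2 / A) := by field_simp
    have e2 : (B / A) ^ 2 * A = B ^ 2 / A := by field_simp
    linarith [h, e1.symm.le, e1.le, e2.le, e2.symm.le]
  have := mul_nonneg hww.le key
  have e3 : A * (C - B ^ 2 / A) = A * C - B ^ 2 := by field_simp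
  linarith [this, e3.le, e3.symm.le]

lemma exists_m (H : EuclideanSpace ℝ (Fin n) →ₗ[ℝ] EuclideanSpace ℝ (Fin n))
    (hpos : ∀ y : EuclideanSpace ℝ (Fin n), y ≠ 0 → 0 < ⟪y, H y⟫)
    (u : EuclideanSpace ℝ (Fin n)) (hu : ‖u‖ = 1) :
    ∃ m > 0, ∀ y : EuclideanSpace ℝ (Fin n), m * ‖y‖ ^ 2 ≤ ⟪y, H y⟫ := by
  have hcont : Continuous fun y : EuclideanSpace ℝ (Fin n) => ⟪y, H y⟫ :=
    continuous_id.inner (H.continuous_of_finiteDimensional.comp continuous_id)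
  have hne : (Metric.sphere (0 : EuclideanSpace ℝ (Fin n)) 1).Nonempty := ⟨u, by simp [hu]⟩
  obtain ⟨y0, hy0mem, hy0min⟩ :=
    (isCompact_sphere (0 : EuclideanSpace ℝ (Fin n)) 1).exists_isMinOn hne hcont.continuousOn
  have hy0norm : ‖y0‖ = 1 := by simpa using hy0mem
  have hy0ne : y0 ≠ 0 := by intro h; rw [h] at hy0norm; simp at hy0norm
  refine ⟨⟪y0, H y0⟫, hpos y0 hy0ne, fun y => ?_⟩
  rcases eq_or_ne y 0 with rfl | hyne
  · simp
  · have hny : 0 < ‖y‖ := norm_pos_iff.mpr hyne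
    set z := ‖y‖⁻¹ • y with hz
    have hzmem : z ∈ Metric.sphere (0 : EuclideanSpace ℝ (Fin n)) 1 := by
      simp [hz, norm_smul, abs_of_pos (inv_pos.mpr hny), inv_mul_cancel₀ hny.ne']
    have hmin : ⟪y0, H y0⟫ ≤ ⟪z, H z⟫ := hy0min hzmem
    have hzval : ⟪z, H z⟫ = ‖y‖⁻¹ ^ 2 * ⟪y, H y⟫ := by
      simp only [hz, _root_.map_smul, real_inner_smul_left, real_inner_smul_right]; ring
    rw [hzval] at hmin
    have h4 : ⟪y0, H y0⟫ * ‖y‖ ^ 2 ≤ ‖y‖⁻¹ ^ 2 * ⟪y, H y⟫ * ‖y‖ ^ 2 :=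
      mul_le_mul_of_nonneg_right hmin (by positivity)
    have e : ‖y‖⁻¹ ^ 2 * ⟪y, H y⟫ * ‖y‖ ^ 2 = ⟪y, H y⟫ := by field_simp
    linarith [h4, e.le, e.symm.le]

lemma lc_mid (ρ : EuclideanSpace ℝ (Fin n) → ℝ) (hlc : IsLogConcave ρ)
    (x xp xm : EuclideanSpace ℝ (Fin n)) (hsum : xp + xm = (2:ℝ) • x)
    (hp : 0 < ρ xp) (hm : 0 < ρ xm) :
    Real.log (ρ xp) + Real.log (ρ xm) ≤ 2 * Real.log (ρ x) := by
  have hmid : (1/2 : ℝ) • xp + (1/2 : ℝ) • xm = x := by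
    have : (1/2 : ℝ) • (xp + xm) = (1/2 : ℝ) • ((2:ℝ) • x) := by rw [hsum]
    rw [smul_add, smul_smul] at this
    norm_num at this
    exact this
  have h := hlc xp xm (1/2) (1/2) (by norm_num) (by norm_num) (by norm_num)
  rw [hmid] at h
  have hl : 0 < ρ xp ^ (1/2 : ℝ) * ρ xm ^ (1/2 : ℝ) := by positivity
  have := Real.log_le_log hl h
  rw [Real.log_mul (by positivity) (by positivity), Real.log_rpow hp, Real.log_rpow hm] at this
  linarith

lemma lc_scale (ρ : EuclideanSpace ℝ (Fin n) → ℝ) (hlc : IsLogConcave ρ)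
    (x y : EuclideanSpace ℝ (Fin n)) (hx : 0 < ρ x) (hy : 0 < ρ (x + y))
    (t : ℝ) (ht0 : 0 < t) (ht1 : t ≤ 1) :
    0 < ρ (x + t • y) ∧
      t * Real.log (ρ (x + y)) + (1 - t) * Real.log (ρ x) ≤ Real.log (ρ (x + t • y)) := by
  have hpt : t • (x + y) + (1 - t) • x = x + t • y := by
    rw [smul_add, sub_smul, one_smul]; abel
  have h := hlc (x + y) x t (1 - t) ht0.le (by linarith) (by ring)
  rw [hpt] at h
  have hl : 0 < ρ (x + y) ^ t * ρ x ^ (1 - t) := by positivity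
  have hpos : 0 < ρ (x + t • y) := lt_of_lt_of_le hl h
  refine ⟨hpos, ?_⟩
  have := Real.log_le_log hl h
  rw [Real.log_mul (by positivity) (by positivity), Real.log_rpow hy, Real.log_rpow hx] at this
  linarith

end Aux

set_option maxHeartbeats 1000000 in
/-- Let `f = -log ρ : ℝⁿ → (-∞,∞]` be convex and `x` a point where the
second-order Taylor expansion `f (x+y) = f x + ⟪y, v⟫ + (1/2)⟪y, H y⟫ + o(‖y‖²)`
holds with `H` symmetric positive definite.  Let `n̂` be a unit vector and
`s = ⟪n̂, x⟫`.  Then, as `γ ↘ 0`, the infimum of `f x⁺ + f x⁻ - 2 f x` over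
`x⁺ + x⁻ = 2x`, `⟪n̂, x^±⟫ = s ± γ` equals `γ²/⟪n̂, H⁻¹ n̂⟫ + o(γ²)`
(here `w = H⁻¹ n̂`, i.e. `H w = n̂`, so that `⟪n̂, H⁻¹ n̂⟫ = ⟪n̂, w⟫`; the
infimum is taken over pairs with `f` finite, which agrees with the full
infimum for all small `γ`). -/
theorem taylor_infimum_asymptotics {n : ℕ}
    (ρ : EuclideanSpace ℝ (Fin n) → ℝ)
    (x v nh w : EuclideanSpace ℝ (Fin n))
    (H : EuclideanSpace ℝ (Fin n) →ₗ[ℝ] EuclideanSpace ℝ (Fin n))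
    (hρ : ∀ z, 0 ≤ ρ z) (hlc : IsLogConcave ρ) (hx : 0 < ρ x)
    (hsymm : ∀ y z, ⟪H y, z⟫ = ⟪y, H z⟫)
    (hpos : ∀ y, y ≠ 0 → 0 < ⟪y, H y⟫)
    (hfin : ∀ᶠ y in 𝓝 (0 : EuclideanSpace ℝ (Fin n)), 0 < ρ (x + y))
    (hTaylor : (fun y => (- Real.log (ρ (x + y))) - (- Real.log (ρ x)) - ⟪y, v⟫
        - (1/2) * ⟪y, H y⟫) =o[𝓝 (0 : EuclideanSpace ℝ (Fin n))] fun y => ‖y‖ ^ 2)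
    (hunit : ‖nh‖ = 1) (hw : H w = nh) :
    (fun γ : ℝ =>
        sInf {r : ℝ | ∃ xp xm : EuclideanSpace ℝ (Fin n),
          xp + xm = (2 : ℝ) • x ∧ ⟪nh, xp⟫ = ⟪nh, x⟫ + γ ∧ ⟪nh, xm⟫ = ⟪nh, x⟫ - γ ∧
          0 < ρ xp ∧ 0 < ρ xm ∧
          r = (- Real.log (ρ xp)) + (- Real.log (ρ xm)) - 2 * (- Real.log (ρ x))}
        - γ ^ 2 / ⟪nh, w⟫) =o[𝓝[>] (0 : ℝ)] fun γ => γ ^ 2 := by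
  classical
  set eF : EuclideanSpace ℝ (Fin n) → ℝ := fun y => (- Real.log (ρ (x + y)))
      - (- Real.log (ρ x)) - ⟪y, v⟫ - (1/2) * ⟪y, H y⟫ with heF
  -- basic positivity facts
  have hpos0 : ∀ y : EuclideanSpace ℝ (Fin n), 0 ≤ ⟪y, H y⟫ := by
    intro y; rcases eq_or_ne y 0 with rfl | h; · simp
    · exact (hpos y h).le
  have hnhne : nh ≠ 0 := by
    intro h; rw [h] at hunit; simp at hunit
  have hwne : w ≠ 0 := by
    intro h; apply hnhne; rw [← hw, h, map_zero]
  have hwHw : ⟪w, H w⟫ = ⟪nh, w⟫ := by rw [← hw]; exact real_inner_comm _ _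
  have hc : 0 < ⟪nh, w⟫ := hwHw ▸ hpos w hwne
  set c : ℝ := ⟪nh, w⟫ with hcdef
  obtain ⟨m, hm, hmle⟩ := exists_m H hpos nh hunit
  have hCS : ∀ y, ⟪nh, y⟫ ^ 2 ≤ c * ⟪y, H y⟫ := by
    intro y
    have h1 := cs_H H hsymm hpos0 w y (hwHw ▸ hc)
    rwa [hwHw, hw] at h1
  have hqid : ∀ y : EuclideanSpace ℝ (Fin n),
      (- Real.log (ρ (x + y))) + (- Real.log (ρ (x - y))) - 2 * (- Real.log (ρ x))
        = ⟪y, H y⟫ + eF y + eF (-y) := by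
    intro y
    have h1 : x + -y = x - y := (sub_eq_add_neg x y).symm
    simp only [heF, h1, inner_neg_left, inner_neg_right, _root_.map_neg, inner_neg_neg]
    ring
  rw [isLittleO_iff]
  intro δ hδ
  set ε := min (m/4) (min (δ*m*c/2) (δ*c^2/(2*(‖w‖^2+1)))) with hεdef
  have hεpos : 0 < ε := lt_min (by positivity) (lt_min (by positivity) (by positivity))
  have hε1 : ε ≤ m/4 := min_le_left _ _
  have hε2 : ε ≤ δ*m*c/2 := le_trans (min_le_right _ _) (min_le_left _ _)
  have hε3 : ε ≤ δ*c^2/(2*(‖w‖^2+1)) := le_trans (min_le_right _ _) (min_le_right _ _)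
  have hT : ∀ᶠ y in 𝓝 (0 : EuclideanSpace ℝ (Fin n)), ‖eF y‖ ≤ ε * ‖‖y‖^2‖ :=
    hTaylor.def hεpos
  obtain ⟨r1, hr1, hball⟩ := Metric.eventually_nhds_iff.mp (hT.and hfin)
  set r0 := r1/2 with hr0def
  have hr0 : 0 < r0 := by positivity
  have hkey : ∀ y : EuclideanSpace ℝ (Fin n), ‖y‖ ≤ r0 →
      |eF y| ≤ ε * ‖y‖^2 ∧ 0 < ρ (x + y) := by
    intro y hy
    have hd : dist y 0 < r1 := by rw [dist_zero_right]; linarith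
    obtain ⟨hb, hpρ⟩ := hball hd
    refine ⟨?_, hpρ⟩
    rw [Real.norm_eq_abs, Real.norm_eq_abs, abs_of_nonneg (sq_nonneg ‖y‖)] at hb
    exact hb
  set γ0 := min (r0 * c / (‖w‖ + 1)) (min 1 (c * (m/2) * r0^2)) with hγ0def
  have hγ0 : 0 < γ0 := lt_min (by positivity) (lt_min one_pos (by positivity))
  filter_upwards [Ioo_mem_nhdsGT_of_mem (Set.left_mem_Ico.mpr hγ0)] with γ hγ
  obtain ⟨hγpos, hγlt⟩ := hγ
  have hγ1 : γ < r0 * c / (‖w‖ + 1) := lt_of_lt_of_le hγlt (min_le_left _ _)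
  have hγ2 : γ ≤ 1 := le_of_lt (lt_of_lt_of_le hγlt (le_trans (min_le_right _ _) (min_le_left _ _)))
  have hγ3 : γ ≤ c * (m/2) * r0^2 :=
    le_of_lt (lt_of_lt_of_le hγlt (le_trans (min_le_right _ _) (min_le_right _ _)))
  -- the candidate minimizer
  set ys := (γ / c) • w with hysdef
  have hysn : ‖ys‖ = (γ / c) * ‖w‖ := by
    rw [hysdef, norm_smul, Real.norm_eq_abs, abs_of_pos (by positivity)]
  have hnys : ‖ys‖ ≤ r0 := by
    rw [hysn]
    rw [lt_div_iff₀ (by positivity)] at hγ1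
    rw [div_mul_eq_mul_div, div_le_iff₀ hc]
    nlinarith [norm_nonneg w]
  have hρp : 0 < ρ (x + ys) := (hkey ys hnys).2
  have hρm : 0 < ρ (x - ys) := by
    have h2 := (hkey (-ys) (by rwa [norm_neg])).2
    rwa [← sub_eq_add_neg] at h2
  have hsum0 : (x + ys) + (x - ys) = (2:ℝ) • x := by rw [two_smul]; abel
  have hip : ⟪nh, x + ys⟫ = ⟪nh, x⟫ + γ := by
    rw [inner_add_right, hysdef, real_inner_smul_right, ← hcdef]
    field_simp
  have him : ⟪nh, x - ys⟫ = ⟪nh, x⟫ - γ := by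
    rw [inner_sub_right, hysdef, real_inner_smul_right, ← hcdef]
    field_simp
  have hysH : ⟪ys, H ys⟫ = γ^2 / c := by
    rw [hysdef, _root_.map_smul, real_inner_smul_left, real_inner_smul_right, hwHw]
    field_simp
  have hmem : (- Real.log (ρ (x + ys))) + (- Real.log (ρ (x - ys))) - 2 * (- Real.log (ρ x))
      ∈ {r : ℝ | ∃ xp xm : EuclideanSpace ℝ (Fin n),
          xp + xm = (2 : ℝ) • x ∧ ⟪nh, xp⟫ = ⟪nh, x⟫ + γ ∧ ⟪nh, xm⟫ = ⟪nh, x⟫ - γ ∧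
          0 < ρ xp ∧ 0 < ρ xm ∧
          r = (- Real.log (ρ xp)) + (- Real.log (ρ xm)) - 2 * (- Real.log (ρ x))} :=
    ⟨x + ys, x - ys, hsum0, hip, him, hρp, hρm, rfl⟩
  set S : Set ℝ := {r : ℝ | ∃ xp xm : EuclideanSpace ℝ (Fin n),
          xp + xm = (2 : ℝ) • x ∧ ⟪nh, xp⟫ = ⟪nh, x⟫ + γ ∧ ⟪nh, xm⟫ = ⟪nh, x⟫ - γ ∧
          0 < ρ xp ∧ 0 < ρ xm ∧
          r = (- Real.log (ρ xp)) + (- Real.log (ρ xm)) - 2 * (- Real.log (ρ x))} with hSdef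
  have hSne : S.Nonempty := ⟨_, hmem⟩
  have hSlb : ∀ r ∈ S, (0:ℝ) ≤ r := by
    rintro r ⟨xp, xm, hsum', hp', hm', hρp', hρm', rfl⟩
    have h3 := lc_mid ρ hlc x xp xm hsum' hρp' hρm'
    linarith
  have hbdd : BddBelow S := ⟨0, fun r hr => hSlb r hr⟩
  clear_value eF c ε r0 γ0 ys S
  clear hεdef hγ0def hr0def hysdef hcdef heF hT hball hTaylor hfin
  -- upper bound
  have hup : sInf S ≤ γ^2/c + δ*γ^2 := by
    have hle : sInf S ≤ (- Real.log (ρ (x + ys))) + (- Real.log (ρ (x - ys)))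
        - 2 * (- Real.log (ρ x)) := csInf_le hbdd hmem
    rw [hqid ys, hysH] at hle
    have hb1 := (hkey ys hnys).1
    have hb2 := (hkey (-ys) (by rwa [norm_neg])).1
    rw [norm_neg] at hb2
    have he1 := (abs_le.mp hb1).2
    have he2 := (abs_le.mp hb2).2
    rw [hysn] at he1 he2
    have hW : ε * (2*‖w‖^2) ≤ δ * c^2 := by
      have h4 : ε * (2*‖w‖^2) ≤ (δ*c^2/(2*(‖w‖^2+1))) * (2*‖w‖^2) :=
        mul_le_mul_of_nonneg_right hε3 (by positivity)
      have h5 : (δ*c^2/(2*(‖w‖^2+1))) * (2*(‖w‖^2+1)) = δ*c^2 := by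
        field_simp
      nlinarith [mul_pos hδ (mul_pos hc hc), sq_nonneg ‖w‖,
        div_nonneg (by positivity : (0:ℝ) ≤ δ*c^2) (by positivity : (0:ℝ) ≤ 2*(‖w‖^2+1))]
    have h6 : eF ys + eF (-ys) ≤ δ * γ^2 := by
      have h7 : eF ys + eF (-ys) ≤ 2 * (ε * ((γ/c)*‖w‖)^2) := by linarith
      have h8 : 2 * (ε * ((γ/c)*‖w‖)^2) * c^2 = (ε * (2*‖w‖^2)) * γ^2 := by
        field_simp
      have h9 : (eF ys + eF (-ys)) * c^2 ≤ 2 * (ε * ((γ/c)*‖w‖)^2) * c^2 :=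
        mul_le_mul_of_nonneg_right h7 (by positivity)
      rw [h8] at h9
      have h10 : ε * (2*‖w‖^2) * γ^2 ≤ δ * c^2 * γ^2 :=
        mul_le_mul_of_nonneg_right hW (sq_nonneg γ)
      have h11 : (eF ys + eF (-ys)) * c^2 ≤ (δ * γ^2) * c^2 := by nlinarith [h9, h10]
      exact le_of_mul_le_mul_right h11 (by positivity)
    linarith
  -- lower bound
  have hlow : γ^2/c - δ*γ^2 ≤ sInf S := by
    apply le_csInf hSne
    rintro r hrS
    rw [hSdef] at hrS
    obtain ⟨xp, xm, hsum', hp', hm', hρp', hρm', rfl⟩ := hrS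
    obtain ⟨y, rfl⟩ : ∃ y, xp = x + y := ⟨xp - x, by abel⟩
    have hxm : xm = x - y := by
      have h9 : xm = (2:ℝ)•x - (x + y) := by rw [← hsum']; abel
      rw [h9, two_smul]; abel
    subst hxm
    have hinner : ⟪nh, y⟫ = γ := by
      rw [inner_add_right] at hp'; linarith
    have hρyp : 0 < ρ (x + y) := hρp'
    have hρym : 0 < ρ (x - y) := hρm'
    rw [hqid y]
    have hQ0 : 0 ≤ ⟪y, H y⟫ := hpos0 y
    have hγQ : γ^2 ≤ c * ⟪y, H y⟫ := by
      have h10 := hCS y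
      rwa [hinner] at h10
    by_cases hcase : ‖y‖ ≤ r0
    · have hb1 := (hkey y hcase).1
      have hb2 := (hkey (-y) (by rwa [norm_neg])).1
      rw [norm_neg] at hb2
      have he1 := (abs_le.mp hb1).1
      have he2 := (abs_le.mp hb2).1
      have hQ := hmle y
      rw [sub_le_iff_le_add, div_le_iff₀ hc]
      nlinarith [mul_le_mul_of_nonneg_left hQ (by positivity : (0:ℝ) ≤ c*ε),
        mul_le_mul_of_nonneg_right hγQ (by linarith : (0:ℝ) ≤ m - 2*ε),
        mul_le_mul_of_nonneg_right (by linarith : 2*ε ≤ δ*m*c) (sq_nonneg γ),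
        mul_le_mul_of_nonneg_left he1 (by positivity : (0:ℝ) ≤ m*c),
        mul_le_mul_of_nonneg_left he2 (by positivity : (0:ℝ) ≤ m*c),
        mul_nonneg (mul_nonneg hm.le hc.le) hQ0, sq_nonneg γ, norm_nonneg y]
    · push_neg at hcase
      have hyn : 0 < ‖y‖ := lt_trans hr0 hcase
      set t := r0 / ‖y‖ with htdef
      have ht0 : 0 < t := by positivity
      have ht1 : t ≤ 1 := by
        rw [htdef, div_le_one hyn]; exact hcase.le
      have htn : t * ‖y‖ = r0 := div_mul_cancel₀ r0 hyn.ne'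
      obtain ⟨hzp, hlogp⟩ := lc_scale ρ hlc x y hx hρyp t ht0 ht1
      obtain ⟨hzm, hlogm⟩ := lc_scale ρ hlc x (-y) hx
        (by rwa [← sub_eq_add_neg]) t ht0 ht1
      set z := t • y with hzdef
      have hmz : x + t • (-y) = x - z := by
        rw [smul_neg, ← sub_eq_add_neg, hzdef]
      have hmy : x + -y = x - y := (sub_eq_add_neg x y).symm
      rw [hmz] at hzm hlogm
      rw [hmy] at hlogm
      have hzn : ‖z‖ = r0 := by
        rw [hzdef, norm_smul, Real.norm_eq_abs, abs_of_pos ht0, htn]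
      clear_value t z
      have hbz1 := (hkey z hzn.le).1
      have hbz2 := (hkey (-z) (by rw [norm_neg]; exact hzn.le)).1
      rw [norm_neg] at hbz2
      have hez1 := (abs_le.mp hbz1).1
      have hez2 := (abs_le.mp hbz2).1
      have hQz := hmle z
      rw [hzn] at hQz hez1 hez2
      -- q(z) ≥ (m/2) r0^2
      have hqz : (m/2) * r0^2 ≤ (- Real.log (ρ (x + z))) + (- Real.log (ρ (x - z)))
          - 2 * (- Real.log (ρ x)) := by
        rw [hqid z]
        have h15 : ε * r0^2 ≤ (m/4) * r0^2 := mul_le_mul_of_nonneg_right hε1 (sq_nonneg r0)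
        linarith [hez1, hez2, hQz, h15]
      -- q(z) ≤ t * q(y)
      have hconv : (- Real.log (ρ (x + z))) + (- Real.log (ρ (x - z)))
          - 2 * (- Real.log (ρ x))
          ≤ t * ((- Real.log (ρ (x + y))) + (- Real.log (ρ (x - y)))
            - 2 * (- Real.log (ρ x))) := by
        linarith [hlogp, hlogm]
      rw [hqid y] at hconv
      set R := ⟪y, H y⟫ + eF y + eF (-y) with hRdef
      clear_value R
      have hR1 : (m/2) * r0^2 ≤ t * R := le_trans hqz hconv
      have hR2 : (m/2) * r0^2 ≤ R := by
        have h11 : (m/2) * r0^2 * ‖y‖ ≤ t * R * ‖y‖ :=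
          mul_le_mul_of_nonneg_right hR1 hyn.le
        have h12 : t * R * ‖y‖ = r0 * R := by
          rw [htdef]; field_simp
        have h16 : (m/2)*r0^2*r0 ≤ (m/2)*r0^2*‖y‖ :=
          mul_le_mul_of_nonneg_left hcase.le (by positivity)
        have h17 : r0 * ((m/2)*r0^2) ≤ r0 * R := by linarith [h11, h12]
        exact le_of_mul_le_mul_left h17 hr0
      have h13 : γ^2/c ≤ (m/2) * r0^2 := by
        rw [div_le_iff₀ hc]
        linarith [mul_le_mul_of_nonneg_right hγ2 hγpos.le, hγ3]
      linarith [hR2, h13, mul_nonneg hδ.le (sq_nonneg γ)]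
  -- conclude
  rw [Real.norm_eq_abs, Real.norm_eq_abs, abs_of_nonneg (sq_nonneg γ), abs_le]
  constructor
  · linarith
  · linarith
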